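/- Let $X$ be a Markov process with the property that for constants $0\le s\le s+t\le T$ and bounded Borel $h$, $\mathbb{E}[\mathbf{1}_A\, h(X_{t+s})\,e^{\int_0^{t+s}\gamma(X_u)du}\mathbf{1}_{\{t+s<\tau\}}]=\mathbb{E}[\mathbf{1}_A\,e^{\int_0^s\gamma(X_u)du}\mathbf{1}_{\{s<\tau\}}\,(\mathcal{T}_t h)(X_s)]$ for all $A\in\mathcal{F}_s$, where $(\mathcal{T}_t)$ is the sub-Markov semigroup generated by the multiplicative functional $M_s=e^{\int_0^s\gamma(X_u)du}\mathbf{1}_{\{s<\tau\}}$. If the conditional expectation transfer formula $\mathbb{E}[\chi\,\mathbf{1}_{\{s<\tau\}}\mid\mathcal{G}_t]$-type identity converts $\mathbb{Q}$-expectations weighted by $M$ into $\mathbb{P}$-expectations of the reduction $X'$ (i.e. $\mathbb{E}[\mathbf{1}_A\,\xi(X_r)M_r]=\mathbb{E}'[\mathbf{1}_A\,\xi(X'_r)]$ for $A\in\mathcal{F}_s$, $r\ge s$, bounded Borel $\xi$), then $\mathbb{E}'[\mathbf{1}_A h(X'_{t+s})]=\mathbb{E}'[\mathbf{1}_A(\mathcal{T}_t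 h)(X'_s)]$, so $X'$ is an $(\mathcal{F},\mathbb{P})$ Markov process on $[0,T]$ with semigroup $(\mathcal{T}_t)$. -/

import Mathlib

open MeasureTheory ProbabilityTheory intervalIntegral

section Stmt12Aux
open Filter
open scoped ENNReal

lemma kernel_lintegral_meas {α β : Type*} [MeasurableSpace α] [MeasurableSpace β]
    (κ : Kernel α β) {f : β → ℝ≥0∞} (hf : Measurable f) :
    Measurable fun a => ∫⁻ y, f y ∂κ a := by
  have : (fun a => ∫⁻ y, f y ∂κ a)
      = fun a => ⨆ n, (SimpleFunc.eapprox f n).lintegral (κ a) := by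
    funext a; exact lintegral_eq_iSup_eapprox_lintegral hf
  rw [this]
  refine Measurable.iSup fun n => ?_
  simp only [SimpleFunc.lintegral]
  exact Finset.measurable_sum _ fun c _ =>
    (κ.measurable_coe ((SimpleFunc.eapprox f n).measurableSet_preimage _)).const_mul c

lemma kernel_integral_meas {α β : Type*} [MeasurableSpace α] [MeasurableSpace β]
    (κ : Kernel α β) {h : β → ℝ} (hh : Measurable h) :
    Measurable fun a => ∫ y, h y ∂κ a := by
  have key : ∀ a, ∫ y, h y ∂κ a =
      if (∫⁻ y, ENNReal.ofReal |h y| ∂κ a) < ⊤ then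
        (∫⁻ y, ENNReal.ofReal (h y) ∂κ a).toReal
          - (∫⁻ y, ENNReal.ofReal (-h y) ∂κ a).toReal
      else 0 := by
    intro a
    split_ifs with hfin
    · have hint : Integrable h (κ a) := by
        refine ⟨hh.aestronglyMeasurable, ?_⟩
        rw [hasFiniteIntegral_iff_norm]
        simpa [Real.norm_eq_abs] using hfin
      exact integral_eq_lintegral_pos_part_sub_lintegral_neg_part hint
    · refine integral_undef fun hint => hfin ?_
      have := hint.2
      rw [hasFiniteIntegral_iff_norm] at this
      simpa [Real.norm_eq_abs] using this
    
  have habs : Measurable fun a => ∫⁻ y, ENNReal.ofReal |h y| ∂κ a :=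
    kernel_lintegral_meas κ (ENNReal.measurable_ofReal.comp hh.abs)
  have hp : Measurable fun a => ∫⁻ y, ENNReal.ofReal (h y) ∂κ a :=
    kernel_lintegral_meas κ (ENNReal.measurable_ofReal.comp hh)
  have hn : Measurable fun a => ∫⁻ y, ENNReal.ofReal (-h y) ∂κ a :=
    kernel_lintegral_meas κ (ENNReal.measurable_ofReal.comp hh.neg)
  simp only [funext key]
  exact Measurable.ite (measurableSet_lt habs measurable_const)
    (hp.ennreal_toReal.sub hn.ennreal_toReal) measurable_const

lemma stmt12_aux {Ω E : Type*} {m0 : MeasurableSpace Ω} [MeasurableSpace E]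
    (ν ν' : Measure Ω) [IsFiniteMeasure ν']
    (f g : Ω → E) (w : Ω → ℝ) (hw0 : ∀ ω, 0 ≤ w ω) (hwInt : Integrable w ν)
    (H : ∀ ζ : E → ℝ, Measurable ζ → (∃ C, ∀ x, |ζ x| ≤ C) →
      ∫ ω, ζ (f ω) * w ω ∂ν = ∫ ω, ζ (g ω) ∂ν')
    (ξ : E → ℝ) (hξ : Measurable ξ) :
    ∫ ω, ξ (f ω) * w ω ∂ν = ∫ ω, ξ (g ω) ∂ν' := by
  classical
  have hwA : AEMeasurable w ν := hwInt.aemeasurable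
  have hmax : ∀ a : ℝ, max a 0 - max (-a) 0 = a := by
    intro a; rcases le_total 0 a with h|h
    · rw [max_eq_left h, max_eq_right (neg_nonpos.mpr h)]; ring
    · rw [max_eq_right h, max_eq_left (neg_nonneg.mpr h)]; ring
  -- truncation transfer equations
  have hEtr : ∀ (φ : E → ℝ), Measurable φ → (∀ x, 0 ≤ φ x) → ∀ n : ℕ,
      ∫ ω, min (φ (f ω)) (n:ℝ) * w ω ∂ν = ∫ ω, min (φ (g ω)) (n:ℝ) ∂ν' := by
    intro φ hφ h0 n
    exact H (fun x => min (φ x) (n:ℝ)) (hφ.min measurable_const)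
      ⟨(n:ℝ), fun x => abs_le.mpr
        ⟨le_trans (neg_nonpos.mpr n.cast_nonneg) (le_min (h0 x) n.cast_nonneg),
         min_le_right _ _⟩⟩
  -- integrability of truncations
  have htQint : ∀ (φ : E → ℝ), (∀ x, 0 ≤ φ x) → ∀ n : ℕ,
      AEMeasurable (fun ω => min (φ (f ω)) (n:ℝ) * w ω) ν →
      Integrable (fun ω => min (φ (f ω)) (n:ℝ) * w ω) ν := by
    intro φ h0 n hm
    refine Integrable.mono' (hwInt.const_mul (n:ℝ))
      (aestronglyMeasurable_iff_aemeasurable.mpr hm) (ae_of_all _ fun ω => ?_)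
    rw [Real.norm_eq_abs,
      abs_of_nonneg (mul_nonneg (le_min (h0 _) n.cast_nonneg) (hw0 ω))]
    exact mul_le_mul_of_nonneg_right (min_le_right _ _) (hw0 ω)
  have htRint : ∀ (φ : E → ℝ), (∀ x, 0 ≤ φ x) → ∀ n : ℕ,
      AEMeasurable (fun ω => min (φ (g ω)) (n:ℝ)) ν' →
      Integrable (fun ω => min (φ (g ω)) (n:ℝ)) ν' := by
    intro φ h0 n hm
    refine Integrable.mono' (integrable_const (n:ℝ))
      (aestronglyMeasurable_iff_aemeasurable.mpr hm) (ae_of_all _ fun ω => ?_)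
    rw [Real.norm_eq_abs, abs_of_nonneg (le_min (h0 _) n.cast_nonneg)]
    exact min_le_right _ _
  -- pointwise identities relating pos/neg parts before/after multiplication by w
  have hidp : ∀ ω, max (ξ (f ω)) 0 * w ω = max (ξ (f ω) * w ω) 0 := fun ω => by
    rw [max_mul_of_nonneg _ _ (hw0 ω), zero_mul]
  have hidm : ∀ ω, max (-ξ (f ω)) 0 * w ω = max (-(ξ (f ω) * w ω)) 0 := fun ω => by
    rw [max_mul_of_nonneg _ _ (hw0 ω), zero_mul, neg_mul]
  -- "junk-zero" lemmas
  have Jzero_p : ¬ AEMeasurable (fun ω => max (ξ (f ω)) 0 * w ω) ν →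
      ∫ ω, ξ (f ω) * w ω ∂ν = 0 := by
    intro hn
    refine integral_non_aestronglyMeasurable fun hsm => hn ?_
    exact ((aestronglyMeasurable_iff_aemeasurable.mp hsm).max
      aemeasurable_const).congr (ae_of_all _ fun ω => (hidp ω).symm)
  have Jzero_m : ¬ AEMeasurable (fun ω => max (-ξ (f ω)) 0 * w ω) ν →
      ∫ ω, ξ (f ω) * w ω ∂ν = 0 := by
    intro hn
    refine integral_non_aestronglyMeasurable fun hsm => hn ?_
    exact (((aestronglyMeasurable_iff_aemeasurable.mp hsm).neg).max
      aemeasurable_const).congr (ae_of_all _ fun ω => (hidm ω).symm)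
  have Izero_p : ¬ AEMeasurable (fun ω => max (ξ (g ω)) 0) ν' →
      ∫ ω, ξ (g ω) ∂ν' = 0 := by
    intro hn
    refine integral_non_aestronglyMeasurable fun hsm => hn ?_
    exact (aestronglyMeasurable_iff_aemeasurable.mp hsm).max aemeasurable_const
  have Izero_m : ¬ AEMeasurable (fun ω => max (-ξ (g ω)) 0) ν' →
      ∫ ω, ξ (g ω) ∂ν' = 0 := by
    intro hn
    refine integral_non_aestronglyMeasurable fun hsm => hn ?_
    exact ((aestronglyMeasurable_iff_aemeasurable.mp hsm).neg).max aemeasurable_const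
  by_cases hν'0 : ν' = 0
  · -- the right-hand measure vanishes
    have hI0 : ∫ ω, ξ (g ω) ∂ν' = 0 := by rw [hν'0]; exact integral_zero_measure _
    rw [hI0]
    have hz : ∀ (φ : E → ℝ), Measurable φ → (∀ x, 0 ≤ φ x) → ∀ n : ℕ,
        ∫ ω, min (φ (f ω)) (n:ℝ) * w ω ∂ν = 0 := by
      intro φ hφ h0 n; rw [hEtr φ hφ h0 n, hν'0]; exact integral_zero_measure _
    have helperQ : ∀ (φ : E → ℝ), Measurable φ → (∀ x, 0 ≤ φ x) →
        ((fun ω => φ (f ω) * w ω) =ᵐ[ν] 0 ∨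
          ¬ AEMeasurable (fun ω => φ (f ω) * w ω) ν) := by
      intro φ hφ h0
      by_cases hQ : ∀ n : ℕ, AEMeasurable (fun ω => min (φ (f ω)) (n:ℝ) * w ω) ν
      · left
        have he : ∀ n : ℕ, (fun ω => min (φ (f ω)) (n:ℝ) * w ω) =ᵐ[ν] 0 := fun n =>
          (integral_eq_zero_iff_of_nonneg_ae
            (ae_of_all _ fun ω => mul_nonneg (le_min (h0 _) n.cast_nonneg) (hw0 ω))
            (htQint φ h0 n (hQ n))).mp (hz φ hφ h0 n)
        filter_upwards [ae_all_iff.mpr he] with ω hω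
        obtain ⟨n₀, hn₀⟩ := exists_nat_ge (φ (f ω))
        have h1 := hω n₀
        simp only [Pi.zero_apply, min_eq_left hn₀] at h1 ⊢
        exact h1
      · right; push_neg at hQ; obtain ⟨n, hn⟩ := hQ
        intro hQa; apply hn
        have hrw : (fun ω => min (φ (f ω)) (n:ℝ) * w ω)
            = fun ω => min (φ (f ω) * w ω) ((n:ℝ) * w ω) :=
          funext fun ω => min_mul_of_nonneg _ _ (hw0 ω)
        rw [hrw]; exact hQa.min (hwA.const_mul _)
    rcases helperQ (fun x => max (ξ x) 0) (hξ.max measurable_const)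
        (fun x => le_max_right _ _) with hp | hp
    · rcases helperQ (fun x => max (-ξ x) 0) (hξ.neg.max measurable_const)
          (fun x => le_max_right _ _) with hm | hm
      · have hq0 : (fun ω => ξ (f ω) * w ω) =ᵐ[ν] 0 := by
          filter_upwards [hp, hm] with ω h1 h2
          simp only [Pi.zero_apply] at h1 h2 ⊢
          have : ξ (f ω) * w ω
              = max (ξ (f ω)) 0 * w ω - max (-ξ (f ω)) 0 * w ω := by
            rw [← sub_mul, hmax]
          rw [this, h1, h2, sub_zero]
        rw [integral_congr_ae hq0]; simp
      · exact Jzero_m hm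
    · exact Jzero_p hp
  by_cases hwz : w =ᵐ[ν] 0
  · -- the density vanishes a.e.
    have hJ0 : ∫ ω, ξ (f ω) * w ω ∂ν = 0 := by
      have hq0 : (fun ω => ξ (f ω) * w ω) =ᵐ[ν] 0 := by
        filter_upwards [hwz] with ω hω
        simp only [Pi.zero_apply] at hω ⊢; rw [hω, mul_zero]
      rw [integral_congr_ae hq0]; simp
    rw [hJ0]
    have hz' : ∀ (φ : E → ℝ), Measurable φ → (∀ x, 0 ≤ φ x) → ∀ n : ℕ,
        ∫ ω, min (φ (g ω)) (n:ℝ) ∂ν' = 0 := by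
      intro φ hφ h0 n
      rw [← hEtr φ hφ h0 n]
      have : (fun ω => min (φ (f ω)) (n:ℝ) * w ω) =ᵐ[ν] 0 := by
        filter_upwards [hwz] with ω hω
        simp only [Pi.zero_apply] at hω ⊢; rw [hω, mul_zero]
      rw [integral_congr_ae this]; simp
    have helperR : ∀ (φ : E → ℝ), Measurable φ → (∀ x, 0 ≤ φ x) →
        ((fun ω => φ (g ω)) =ᵐ[ν'] 0 ∨ ¬ AEMeasurable (fun ω => φ (g ω)) ν') := by
      intro φ hφ h0
      by_cases hR : ∀ n : ℕ, AEMeasurable (fun ω => min (φ (g ω)) (n:ℝ)) ν'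
      · left
        have he : ∀ n : ℕ, (fun ω => min (φ (g ω)) (n:ℝ)) =ᵐ[ν'] 0 := fun n =>
          (integral_eq_zero_iff_of_nonneg_ae
            (ae_of_all _ fun ω => le_min (h0 _) n.cast_nonneg)
            (htRint φ h0 n (hR n))).mp (hz' φ hφ h0 n)
        filter_upwards [ae_all_iff.mpr he] with ω hω
        obtain ⟨n₀, hn₀⟩ := exists_nat_ge (φ (g ω))
        have h1 := hω n₀
        simp only [Pi.zero_apply, min_eq_left hn₀] at h1 ⊢
        exact h1
      · right; push_neg at hR; obtain ⟨n, hn⟩ := hR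
        intro hRa; exact hn (hRa.min aemeasurable_const)
    rcases helperR (fun x => max (ξ x) 0) (hξ.max measurable_const)
        (fun x => le_max_right _ _) with hp | hp
    · rcases helperR (fun x => max (-ξ x) 0) (hξ.neg.max measurable_const)
          (fun x => le_max_right _ _) with hm | hm
      · have hr0 : (fun ω => ξ (g ω)) =ᵐ[ν'] 0 := by
          filter_upwards [hp, hm] with ω h1 h2
          simp only [Pi.zero_apply] at h1 h2 ⊢
          have : ξ (g ω) = max (ξ (g ω)) 0 - max (-ξ (g ω)) 0 := (hmax _).symm
          rw [this, h1, h2, sub_zero]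
        rw [integral_congr_ae hr0]; simp
      · exact (Izero_m hm).symm
    · exact (Izero_p hp).symm
  -- main case : ν' ≠ 0 and w not a.e. zero
  · have probe1 : ∀ (φ : E → ℝ), Measurable φ → (∀ x, 0 ≤ φ x) → ∀ n : ℕ,
        ¬ AEMeasurable (fun ω => min (φ (f ω)) (n:ℝ) * w ω) ν →
        ¬ AEMeasurable (fun ω => min (φ (g ω)) (n:ℝ)) ν' := by
      intro φ hφ h0 n hnf hg
      rcases Nat.eq_zero_or_pos n with rfl | hnpos
      · apply hnf
        have : (fun ω => min (φ (f ω)) ((0:ℕ):ℝ) * w ω) = fun _ => (0:ℝ) :=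
          funext fun ω => by simp [min_eq_right (h0 (f ω))]
        rw [this]; exact aemeasurable_const
      · have e1 := hEtr φ hφ h0 n
        have hL1 : ∫ ω, min (φ (f ω)) (n:ℝ) * w ω ∂ν = 0 :=
          integral_non_aestronglyMeasurable fun hsm =>
            hnf (aestronglyMeasurable_iff_aemeasurable.mp hsm)
        have e2 := H (fun x => (n:ℝ) - min (φ x) (n:ℝ))
          (measurable_const.sub (hφ.min measurable_const))
          ⟨(n:ℝ), fun x => abs_le.mpr
            ⟨by
              have h1 : min (φ x) (n:ℝ) ≤ (n:ℝ) := min_le_right _ _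
              show -(n:ℝ) ≤ (n:ℝ) - min (φ x) (n:ℝ)
              linarith,
             by
              have h2 : (0:ℝ) ≤ min (φ x) (n:ℝ) := le_min (h0 x) n.cast_nonneg
              show (n:ℝ) - min (φ x) (n:ℝ) ≤ (n:ℝ)
              linarith⟩⟩
        have hL2 : ∫ ω, ((n:ℝ) - min (φ (f ω)) (n:ℝ)) * w ω ∂ν = 0 := by
          refine integral_non_aestronglyMeasurable fun hsm => hnf ?_
          have hu : AEMeasurable (fun ω => ((n:ℝ) - min (φ (f ω)) (n:ℝ)) * w ω) ν :=
            aestronglyMeasurable_iff_aemeasurable.mp hsm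
          have hrw : (fun ω => min (φ (f ω)) (n:ℝ) * w ω)
              = fun ω => (n:ℝ) * w ω - ((n:ℝ) - min (φ (f ω)) (n:ℝ)) * w ω :=
            funext fun ω => by ring
          rw [hrw]; exact (hwA.const_mul _).sub hu
        rw [hL1] at e1
        rw [hL2] at e2
        have hi1 : Integrable (fun ω => min (φ (g ω)) (n:ℝ)) ν' :=
          htRint φ h0 n hg
        have hi2 : Integrable (fun ω => (n:ℝ) - min (φ (g ω)) (n:ℝ)) ν' :=
          (integrable_const (n:ℝ)).sub hi1
        have hsum : ∫ ω, (min (φ (g ω)) (n:ℝ) + ((n:ℝ) - min (φ (g ω)) (n:ℝ))) ∂ν' = 0 := by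
          rw [integral_add hi1 hi2, ← e1, ← e2, add_zero]
        have hconst : (fun ω => (min (φ (g ω)) (n:ℝ) + ((n:ℝ) - min (φ (g ω)) (n:ℝ))))
            = fun _ => (n:ℝ) := funext fun ω => by ring
        rw [hconst, MeasureTheory.integral_const, smul_eq_mul] at hsum
        have hne : ((n:ℝ)) ≠ 0 := Nat.cast_ne_zero.mpr hnpos.ne'
        have htor : (ν' Set.univ).toReal = 0 := by
          rcases mul_eq_zero.mp hsum with h | h
          · exact h
          · exact absurd h hne
        have : ν' Set.univ = 0 := by
          rcases (ENNReal.toReal_eq_zero_iff _).mp htor with h | h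
          · exact h
          · exact absurd h (measure_ne_top _ _)
        exact hν'0 (Measure.measure_univ_eq_zero.mp this)
    have probe2 : ∀ (φ : E → ℝ), Measurable φ → (∀ x, 0 ≤ φ x) → ∀ n : ℕ,
        ¬ AEMeasurable (fun ω => min (φ (g ω)) (n:ℝ)) ν' →
        ¬ AEMeasurable (fun ω => min (φ (f ω)) (n:ℝ) * w ω) ν := by
      intro φ hφ h0 n hng hf
      rcases Nat.eq_zero_or_pos n with rfl | hnpos
      · apply hng
        have : (fun ω => min (φ (g ω)) ((0:ℕ):ℝ)) = fun _ => (0:ℝ) :=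
          funext fun ω => by simp [min_eq_right (h0 (g ω))]
        rw [this]; exact aemeasurable_const
      · have e1 := hEtr φ hφ h0 n
        have hR1 : ∫ ω, min (φ (g ω)) (n:ℝ) ∂ν' = 0 :=
          integral_non_aestronglyMeasurable fun hsm =>
            hng (aestronglyMeasurable_iff_aemeasurable.mp hsm)
        have e2 := H (fun x => (n:ℝ) - min (φ x) (n:ℝ))
          (measurable_const.sub (hφ.min measurable_const))
          ⟨(n:ℝ), fun x => abs_le.mpr
            ⟨by
              have h1 : min (φ x) (n:ℝ) ≤ (n:ℝ) := min_le_right _ _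
              show -(n:ℝ) ≤ (n:ℝ) - min (φ x) (n:ℝ)
              linarith,
             by
              have h2 : (0:ℝ) ≤ min (φ x) (n:ℝ) := le_min (h0 x) n.cast_nonneg
              show (n:ℝ) - min (φ x) (n:ℝ) ≤ (n:ℝ)
              linarith⟩⟩
        have hR2 : ∫ ω, ((n:ℝ) - min (φ (g ω)) (n:ℝ)) ∂ν' = 0 := by
          refine integral_non_aestronglyMeasurable fun hsm => hng ?_
          have hu : AEMeasurable (fun ω => (n:ℝ) - min (φ (g ω)) (n:ℝ)) ν' :=
            aestronglyMeasurable_iff_aemeasurable.mp hsm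
          have hrw : (fun ω => min (φ (g ω)) (n:ℝ))
              = fun ω => (n:ℝ) - ((n:ℝ) - min (φ (g ω)) (n:ℝ)) :=
            funext fun ω => by ring
          rw [hrw]; exact aemeasurable_const.sub hu
        rw [hR1] at e1
        rw [hR2] at e2
        have hu2 : AEMeasurable (fun ω => ((n:ℝ) - min (φ (f ω)) (n:ℝ)) * w ω) ν := by
          have hrw : (fun ω => ((n:ℝ) - min (φ (f ω)) (n:ℝ)) * w ω)
              = fun ω => (n:ℝ) * w ω - min (φ (f ω)) (n:ℝ) * w ω :=
            funext fun ω => by ring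
          rw [hrw]; exact (hwA.const_mul _).sub hf
        have hi1 : Integrable (fun ω => min (φ (f ω)) (n:ℝ) * w ω) ν :=
          htQint φ h0 n hf
        have hi2 : Integrable (fun ω => ((n:ℝ) - min (φ (f ω)) (n:ℝ)) * w ω) ν := by
          refine Integrable.mono' (hwInt.const_mul (n:ℝ))
            (aestronglyMeasurable_iff_aemeasurable.mpr hu2) (ae_of_all _ fun ω => ?_)
          have h2 : (0:ℝ) ≤ min (φ (f ω)) (n:ℝ) := le_min (h0 _) n.cast_nonneg
          have h1 : min (φ (f ω)) (n:ℝ) ≤ (n:ℝ) := min_le_right _ _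
          rw [Real.norm_eq_abs, abs_of_nonneg (mul_nonneg (by linarith) (hw0 ω))]
          exact mul_le_mul_of_nonneg_right (by linarith) (hw0 ω)
        have hsum : ∫ ω, (min (φ (f ω)) (n:ℝ) * w ω
            + ((n:ℝ) - min (φ (f ω)) (n:ℝ)) * w ω) ∂ν = 0 := by
          rw [integral_add hi1 hi2, e1, e2, add_zero]
        have hconst : (fun ω => (min (φ (f ω)) (n:ℝ) * w ω
            + ((n:ℝ) - min (φ (f ω)) (n:ℝ)) * w ω)) = fun ω => (n:ℝ) * w ω :=
          funext fun ω => by ring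
        rw [hconst, MeasureTheory.integral_const_mul] at hsum
        have hne : ((n:ℝ)) ≠ 0 := Nat.cast_ne_zero.mpr hnpos.ne'
        have hw_int_zero : ∫ ω, w ω ∂ν = 0 := by
          rcases mul_eq_zero.mp hsum with h | h
          · exact absurd h hne
          · exact h
        exact hwz ((integral_eq_zero_iff_of_nonneg_ae
          (ae_of_all _ hw0) hwInt).mp hw_int_zero)
    -- dichotomy for a nonnegative measurable φ
    have dichot : ∀ (φ : E → ℝ), Measurable φ → (∀ x, 0 ≤ φ x) →
        (AEMeasurable (fun ω => φ (f ω) * w ω) ν ∧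
          AEMeasurable (fun ω => φ (g ω)) ν' ∧
          ∫⁻ ω, ENNReal.ofReal (φ (f ω) * w ω) ∂ν
            = ∫⁻ ω, ENNReal.ofReal (φ (g ω)) ∂ν')
        ∨ (¬ AEMeasurable (fun ω => φ (f ω) * w ω) ν ∧
            ¬ AEMeasurable (fun ω => φ (g ω)) ν') := by
      intro φ hφ h0
      by_cases hQ : ∀ n : ℕ, AEMeasurable (fun ω => min (φ (f ω)) (n:ℝ) * w ω) ν
      · have hR : ∀ n : ℕ, AEMeasurable (fun ω => min (φ (g ω)) (n:ℝ)) ν' := by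
          intro n; by_contra hn; exact probe2 φ hφ h0 n hn (hQ n)
        left
        have hQa : AEMeasurable (fun ω => φ (f ω) * w ω) ν := by
          refine aemeasurable_of_tendsto_metrizable_ae' hQ (ae_of_all _ fun ω => ?_)
          have h1 : Tendsto (fun n : ℕ => min (φ (f ω)) (n:ℝ)) atTop (nhds (φ (f ω))) := by
            obtain ⟨n₀, hn₀⟩ := exists_nat_ge (φ (f ω))
            exact tendsto_atTop_of_eventually_const (i₀ := n₀) fun n hn =>
              min_eq_left (le_trans hn₀ (Nat.cast_le.mpr hn))
          exact h1.mul_const (w ω)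
        have hRa : AEMeasurable (fun ω => φ (g ω)) ν' := by
          refine aemeasurable_of_tendsto_metrizable_ae' hR (ae_of_all _ fun ω => ?_)
          obtain ⟨n₀, hn₀⟩ := exists_nat_ge (φ (g ω))
          exact tendsto_atTop_of_eventually_const (i₀ := n₀) fun n hn =>
            min_eq_left (le_trans hn₀ (Nat.cast_le.mpr hn))
        refine ⟨hQa, hRa, ?_⟩
        have hml : ∫⁻ ω, ENNReal.ofReal (φ (f ω) * w ω) ∂ν
            = ⨆ n : ℕ, ∫⁻ ω, ENNReal.ofReal (min (φ (f ω)) (n:ℝ) * w ω) ∂ν := by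
          rw [← lintegral_iSup' (fun n => (hQ n).ennreal_ofReal)
            (ae_of_all _ fun ω i j hij => ENNReal.ofReal_le_ofReal
              (mul_le_mul_of_nonneg_right
                (min_le_min le_rfl (Nat.cast_le.mpr hij)) (hw0 ω)))]
          refine lintegral_congr fun ω => ?_
          refine le_antisymm ?_ (iSup_le fun n => ENNReal.ofReal_le_ofReal
            (mul_le_mul_of_nonneg_right (min_le_left _ _) (hw0 ω)))
          obtain ⟨n₀, hn₀⟩ := exists_nat_ge (φ (f ω))
          exact le_iSup_of_le n₀ (le_of_eq (by rw [min_eq_left hn₀]))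
        have hmr : ∫⁻ ω, ENNReal.ofReal (φ (g ω)) ∂ν'
            = ⨆ n : ℕ, ∫⁻ ω, ENNReal.ofReal (min (φ (g ω)) (n:ℝ)) ∂ν' := by
          rw [← lintegral_iSup' (fun n => (hR n).ennreal_ofReal)
            (ae_of_all _ fun ω i j hij => ENNReal.ofReal_le_ofReal
              (min_le_min le_rfl (Nat.cast_le.mpr hij)))]
          refine lintegral_congr fun ω => ?_
          refine le_antisymm ?_
            (iSup_le fun n => ENNReal.ofReal_le_ofReal (min_le_left _ _))
          obtain ⟨n₀, hn₀⟩ := exists_nat_ge (φ (g ω))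
          exact le_iSup_of_le n₀ (le_of_eq (by rw [min_eq_left hn₀]))
        have hn_eq : ∀ n : ℕ, ∫⁻ ω, ENNReal.ofReal (min (φ (f ω)) (n:ℝ) * w ω) ∂ν
            = ∫⁻ ω, ENNReal.ofReal (min (φ (g ω)) (n:ℝ)) ∂ν' := by
          intro n
          rw [← ofReal_integral_eq_lintegral_ofReal (htQint φ h0 n (hQ n))
              (ae_of_all _ fun ω => mul_nonneg (le_min (h0 _) n.cast_nonneg) (hw0 ω)),
            ← ofReal_integral_eq_lintegral_ofReal (htRint φ h0 n (hR n))
              (ae_of_all _ fun ω => le_min (h0 _) n.cast_nonneg),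
            hEtr φ hφ h0 n]
        rw [hml, hmr]
        exact iSup_congr hn_eq
      · push_neg at hQ; obtain ⟨n, hn⟩ := hQ
        right
        constructor
        · intro hQa
          apply hn
          have hrw : (fun ω => min (φ (f ω)) (n:ℝ) * w ω)
              = fun ω => min (φ (f ω) * w ω) ((n:ℝ) * w ω) :=
            funext fun ω => min_mul_of_nonneg _ _ (hw0 ω)
          rw [hrw]; exact hQa.min (hwA.const_mul _)
        · intro hRa
          exact probe1 φ hφ h0 n hn (hRa.min aemeasurable_const)
    rcases dichot (fun x => max (ξ x) 0) (hξ.max measurable_const)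
        (fun x => le_max_right _ _) with hp | hp
    · rcases dichot (fun x => max (-ξ x) 0) (hξ.neg.max measurable_const)
          (fun x => le_max_right _ _) with hm | hm
      · obtain ⟨hQp, hRp, hVp⟩ := hp
        obtain ⟨hQm, hRm, hVm⟩ := hm
        have hVp' : ∫⁻ ω, ENNReal.ofReal (max (ξ (f ω)) 0 * w ω) ∂ν
            = ∫⁻ ω, ENNReal.ofReal (max (ξ (g ω)) 0) ∂ν' := hVp
        have hVm' : ∫⁻ ω, ENNReal.ofReal (max (-ξ (f ω)) 0 * w ω) ∂ν
            = ∫⁻ ω, ENNReal.ofReal (max (-ξ (g ω)) 0) ∂ν' := hVm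
        by_cases hTp : ∫⁻ ω, ENNReal.ofReal (max (ξ (f ω)) 0 * w ω) ∂ν = ⊤
        · have hJ : ¬ Integrable (fun ω => ξ (f ω) * w ω) ν := by
            intro hint
            have h2 := (hasFiniteIntegral_iff_norm _).mp hint.2
            have hle : (⊤:ℝ≥0∞) ≤ ∫⁻ ω, ENNReal.ofReal ‖ξ (f ω) * w ω‖ ∂ν := by
              rw [← hTp]
              refine lintegral_mono fun ω => ENNReal.ofReal_le_ofReal ?_
              rw [Real.norm_eq_abs, abs_mul, abs_of_nonneg (hw0 ω)]
              exact mul_le_mul_of_nonneg_right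
                (max_le (le_abs_self _) (abs_nonneg _)) (hw0 ω)
            exact absurd h2 (not_lt.mpr hle)
          have hTp2 : ∫⁻ ω, ENNReal.ofReal (max (ξ (g ω)) 0) ∂ν' = ⊤ := by
            rw [← hVp']; exact hTp
          have hI : ¬ Integrable (fun ω => ξ (g ω)) ν' := by
            intro hint
            have h2 := (hasFiniteIntegral_iff_norm _).mp hint.2
            have hle : (⊤:ℝ≥0∞) ≤ ∫⁻ ω, ENNReal.ofReal ‖ξ (g ω)‖ ∂ν' := by
              rw [← hTp2]
              refine lintegral_mono fun ω => ENNReal.ofReal_le_ofReal ?_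
              rw [Real.norm_eq_abs]
              exact max_le (le_abs_self _) (abs_nonneg _)
            exact absurd h2 (not_lt.mpr hle)
          rw [integral_undef hJ, integral_undef hI]
        · by_cases hTm : ∫⁻ ω, ENNReal.ofReal (max (-ξ (f ω)) 0 * w ω) ∂ν = ⊤
          · have hJ : ¬ Integrable (fun ω => ξ (f ω) * w ω) ν := by
              intro hint
              have h2 := (hasFiniteIntegral_iff_norm _).mp hint.2
              have hle : (⊤:ℝ≥0∞) ≤ ∫⁻ ω, ENNReal.ofReal ‖ξ (f ω) * w ω‖ ∂ν := by
                rw [← hTm]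
                refine lintegral_mono fun ω => ENNReal.ofReal_le_ofReal ?_
                rw [Real.norm_eq_abs, abs_mul, abs_of_nonneg (hw0 ω)]
                exact mul_le_mul_of_nonneg_right
                  (max_le (neg_le_abs _) (abs_nonneg _)) (hw0 ω)
              exact absurd h2 (not_lt.mpr hle)
            have hTm2 : ∫⁻ ω, ENNReal.ofReal (max (-ξ (g ω)) 0) ∂ν' = ⊤ := by
              rw [← hVm']; exact hTm
            have hI : ¬ Integrable (fun ω => ξ (g ω)) ν' := by
              intro hint
              have h2 := (hasFiniteIntegral_iff_norm _).mp hint.2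
              have hle : (⊤:ℝ≥0∞) ≤ ∫⁻ ω, ENNReal.ofReal ‖ξ (g ω)‖ ∂ν' := by
                rw [← hTm2]
                refine lintegral_mono fun ω => ENNReal.ofReal_le_ofReal ?_
                rw [Real.norm_eq_abs]
                exact max_le (neg_le_abs _) (abs_nonneg _)
              exact absurd h2 (not_lt.mpr hle)
            rw [integral_undef hJ, integral_undef hI]
          · have hTp2 : ∫⁻ ω, ENNReal.ofReal (max (ξ (g ω)) 0) ∂ν' ≠ ⊤ := by
              rw [← hVp']; exact hTp
            have hTm2 : ∫⁻ ω, ENNReal.ofReal (max (-ξ (g ω)) 0) ∂ν' ≠ ⊤ := by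
              rw [← hVm']; exact hTm
            have hIqp : Integrable (fun ω => max (ξ (f ω)) 0 * w ω) ν := by
              refine ⟨aestronglyMeasurable_iff_aemeasurable.mpr hQp, ?_⟩
              rw [hasFiniteIntegral_iff_norm, lintegral_congr (fun ω => by
                rw [Real.norm_eq_abs,
                  abs_of_nonneg (mul_nonneg (le_max_right _ _) (hw0 ω))])]
              exact lt_top_iff_ne_top.mpr hTp
            have hIqm : Integrable (fun ω => max (-ξ (f ω)) 0 * w ω) ν := by
              refine ⟨aestronglyMeasurable_iff_aemeasurable.mpr hQm, ?_⟩
              rw [hasFiniteIntegral_iff_norm, lintegral_congr (fun ω => by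
                rw [Real.norm_eq_abs,
                  abs_of_nonneg (mul_nonneg (le_max_right _ _) (hw0 ω))])]
              exact lt_top_iff_ne_top.mpr hTm
            have hIrp : Integrable (fun ω => max (ξ (g ω)) 0) ν' := by
              refine ⟨aestronglyMeasurable_iff_aemeasurable.mpr hRp, ?_⟩
              rw [hasFiniteIntegral_iff_norm, lintegral_congr (fun ω => by
                rw [Real.norm_eq_abs, abs_of_nonneg (le_max_right _ _)])]
              exact lt_top_iff_ne_top.mpr hTp2
            have hIrm : Integrable (fun ω => max (-ξ (g ω)) 0) ν' := by
              refine ⟨aestronglyMeasurable_iff_aemeasurable.mpr hRm, ?_⟩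
              rw [hasFiniteIntegral_iff_norm, lintegral_congr (fun ω => by
                rw [Real.norm_eq_abs, abs_of_nonneg (le_max_right _ _)])]
              exact lt_top_iff_ne_top.mpr hTm2
            have hfe : (fun ω => ξ (f ω) * w ω)
                = fun ω => max (ξ (f ω)) 0 * w ω - max (-ξ (f ω)) 0 * w ω :=
              funext fun ω => by rw [← sub_mul, hmax]
            have hge : (fun ω => ξ (g ω))
                = fun ω => max (ξ (g ω)) 0 - max (-ξ (g ω)) 0 :=
              funext fun ω => (hmax _).symm
            have e1 : ∫ ω, max (ξ (f ω)) 0 * w ω ∂ν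
                = (∫⁻ ω, ENNReal.ofReal (max (ξ (f ω)) 0 * w ω) ∂ν).toReal :=
              integral_eq_lintegral_of_nonneg_ae
                (ae_of_all _ fun ω => mul_nonneg (le_max_right _ _) (hw0 ω)) hIqp.1
            have e2 : ∫ ω, max (-ξ (f ω)) 0 * w ω ∂ν
                = (∫⁻ ω, ENNReal.ofReal (max (-ξ (f ω)) 0 * w ω) ∂ν).toReal :=
              integral_eq_lintegral_of_nonneg_ae
                (ae_of_all _ fun ω => mul_nonneg (le_max_right _ _) (hw0 ω)) hIqm.1
            have e3 : ∫ ω, max (ξ (g ω)) 0 ∂ν'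
                = (∫⁻ ω, ENNReal.ofReal (max (ξ (g ω)) 0) ∂ν').toReal :=
              integral_eq_lintegral_of_nonneg_ae
                (ae_of_all _ fun ω => le_max_right _ _) hIrp.1
            have e4 : ∫ ω, max (-ξ (g ω)) 0 ∂ν'
                = (∫⁻ ω, ENNReal.ofReal (max (-ξ (g ω)) 0) ∂ν').toReal :=
              integral_eq_lintegral_of_nonneg_ae
                (ae_of_all _ fun ω => le_max_right _ _) hIrm.1
            rw [hfe, hge, integral_sub hIqp hIqm, integral_sub hIrp hIrm,
              e1, e2, e3, e4, hVp', hVm']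
      · rw [Jzero_m hm.1, Izero_m hm.2]
    · rw [Jzero_p hp.1, Izero_p hp.2]

end Stmt12Aux


theorem stmt12 {Ω : Type*} {m0 : MeasurableSpace Ω} {d : ℕ}
    (μ μ' : @Measure Ω m0) [IsProbabilityMeasure μ] [IsProbabilityMeasure μ']
    (F : ℝ → MeasurableSpace Ω) (hF : ∀ s, F s ≤ m0) (hFmono : Monotone F)
    (T : ℝ) (τ : Ω → ℝ)
    (X X' : ℝ → Ω → (Fin d → ℝ))
    (γ : (Fin d → ℝ) → ℝ) (hγ0 : ∀ x, 0 ≤ γ x) (hγmeas : Measurable γ)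
    -- the multiplicative functional M_r = e^{∫_0^r γ(X_u) du} 1_{r<τ}
    (M : ℝ → Ω → ℝ)
    (hM : ∀ r ω, M r ω
      = Real.exp (∫ u in (0:ℝ)..r, γ (X u ω)) * (if r < τ ω then (1:ℝ) else 0))
    -- the sub-Markov semigroup (𝒯_t) generated by M
    (𝒯 : ℝ → Kernel (Fin d → ℝ) (Fin d → ℝ))
    (hsemigroup : ∀ s t, 0 ≤ s → 0 ≤ t → s + t ≤ T →
      ∀ A : Set Ω, MeasurableSet[F s] A →
      ∀ h : (Fin d → ℝ) → ℝ, Measurable h → (∃ C, ∀ x, |h x| ≤ C) →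
        ∫ ω in A, h (X (s + t) ω) * M (s + t) ω ∂μ
          = ∫ ω in A, M s ω * (∫ y, h y ∂(𝒯 t (X s ω))) ∂μ)
    -- transfer formula: E_Q[1_A ξ(X_r) M_r] = E_P[1_A ξ(X'_r)]
    (htransfer : ∀ s r, 0 ≤ s → s ≤ r → r ≤ T →
      ∀ A : Set Ω, MeasurableSet[F s] A →
      ∀ ξ : (Fin d → ℝ) → ℝ, Measurable ξ → (∃ C, ∀ x, |ξ x| ≤ C) →
        ∫ ω in A, ξ (X r ω) * M r ω ∂μ = ∫ ω in A, ξ (X' r ω) ∂μ') :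
    -- X' is an (ℱ, ℙ) Markov process on [0,T] with semigroup (𝒯_t)
    ∀ s t, 0 ≤ s → 0 ≤ t → s + t ≤ T →
      ∀ A : Set Ω, MeasurableSet[F s] A →
      ∀ h : (Fin d → ℝ) → ℝ, Measurable h → (∃ C, ∀ x, |h x| ≤ C) →
        ∫ ω in A, h (X' (s + t) ω) ∂μ'
          = ∫ ω in A, (∫ y, h y ∂(𝒯 t (X' s ω))) ∂μ' := by
  intro s t hs ht hsum A hA h hmeas hb
  obtain ⟨C, hC⟩ := hb
  have hsT : s ≤ T := by linarith
  have hstT : s ≤ s + t := by linarith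
  have E2 : ∫ ω in A, h (X (s+t) ω) * M (s+t) ω ∂μ
      = ∫ ω in A, h (X' (s+t) ω) ∂μ' :=
    htransfer s (s+t) hs hstT hsum A hA h hmeas ⟨C, hC⟩
  have E1 := hsemigroup s t hs ht hsum A hA h hmeas ⟨C, hC⟩
  have hξ : Measurable fun x => ∫ y, h y ∂(𝒯 t x) :=
    kernel_integral_meas (𝒯 t) hmeas
  have hw0 : ∀ ω, 0 ≤ M s ω := fun ω => by
    rw [hM]; positivity
  -- integrability of M s with respect to μ
  have h1 := htransfer s s hs le_rfl hsT Set.univ MeasurableSet.univ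
    (fun _ => (1:ℝ)) measurable_const ⟨1, fun _ => by norm_num⟩
  simp only [one_mul, Measure.restrict_univ] at h1
  have h1' : ∫ ω, M s ω ∂μ = 1 := by
    rw [h1]; simp
  have hwInt : Integrable (M s) μ := by
    by_contra hni
    rw [integral_undef hni] at h1'
    norm_num at h1'
  haveI : IsFiniteMeasure (μ'.restrict A) :=
    ⟨by rw [Measure.restrict_apply_univ]; exact measure_lt_top μ' A⟩
  have main := stmt12_aux (μ.restrict A) (μ'.restrict A) (X s) (X' s) (M s)
    hw0 hwInt.restrict
    (fun ζ hζ hbζ => htransfer s s hs le_rfl hsT A hA ζ hζ hbζ)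
    (fun x => ∫ y, h y ∂(𝒯 t x)) hξ
  have hcomm : ∫ ω in A, M s ω * (∫ y, h y ∂(𝒯 t (X s ω))) ∂μ
      = ∫ ω in A, (∫ y, h y ∂(𝒯 t (X s ω))) * M s ω ∂μ := by
    refine integral_congr_ae (ae_of_all _ fun ω => ?_)
    exact mul_comm _ _
  calc ∫ ω in A, h (X' (s + t) ω) ∂μ'
      = ∫ ω in A, h (X (s+t) ω) * M (s+t) ω ∂μ := E2.symm
    _ = ∫ ω in A, M s ω * (∫ y, h y ∂(𝒯 t (X s ω))) ∂μ := E1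
    _ = ∫ ω in A, (∫ y, h y ∂(𝒯 t (X s ω))) * M s ω ∂μ := hcomm
    _ = ∫ ω in A, (∫ y, h y ∂(𝒯 t (X' s ω))) ∂μ' := main
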